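/- Let c and d be positive integers and let n = cd + c − 1. Then every (d+1)-subset of [n] is contained in exactly one of the intervals [A, f_c(A)], as A ranges over all d-subsets of [n]. -/

import Mathlib

/-!
A block of a block structure with density `c` has exactly `c` times as many points as it has
points of `A`, so the gaps of a `d`-set `A` have `c - 1` points in all and `[A, f_c(A)]` contains
exactly `c - 1` sets of size `d + 1`. Since `C(n, d) (c - 1) = C(n, d + 1)`, uniqueness follows by
double counting once every `(d + 1)`-set `D` is covered. Give the points of `D` weight `c - 1` and
the other points weight `-1`; the total weight around the circle is `c (d + 1) - n = 1`, so by the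
cycle lemma some `x ∈ D` ends no arc of weight at least `c`. Then `x` lies in a gap of every block
structure of `D \ {x}`: otherwise the initial segment of its block ending at `x` has density at
least `1 / c` in `D \ {x}`, hence weight at least `c` with respect to `D`.
-/

open Fin.NatCast

/-- The clockwise arc of `l` consecutive points on the circular representation of `[n]`
(modelled as `Fin n`), starting at `s`. -/
def cArc (n : ℕ) [NeZero n] (s : Fin n) (l : ℕ) : Finset (Fin n) :=
  (Finset.range l).image (fun t : ℕ => s + (t : Fin n))

/-- The interval `[A,B] = {C : A ⊆ C ⊆ B}` in the Boolean lattice of subsets of `[n]`. -/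
def fInterval {n : ℕ} (A B : Finset (Fin n)) : Finset (Finset (Fin n)) :=
  B.powerset.filter (fun C => A ⊆ C)

/-- A block structure of `A ⊆ [n]` with respect to the density `δ`: a partition of the
circular representation of `[n]` into clockwise-consecutive blocks
`B₁, G₁, B₂, G₂, …, B_k, G_k` satisfying conditions (i)-(iv). Block `Bᵢ` is the arc of
length `blen i` starting at `bstart i`, and the gap `Gᵢ` is the arc of length `glen i`
immediately following `Bᵢ`. -/
structure BlockStructure (n : ℕ) [NeZero n] (δ : ℝ) (A : Finset (Fin n)) where
  k : ℕ
  kpos : 0 < k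
  bstart : Fin k → Fin n
  blen : Fin k → ℕ
  glen : Fin k → ℕ
  blen_pos : ∀ i, 0 < blen i
  /-- the blocks and gaps are clockwise-consecutive: `B_{i+1}` starts right after `Gᵢ` -/
  consec : ∀ i : Fin k,
    bstart ⟨(i.val + 1) % k, Nat.mod_lt _ kpos⟩ = bstart i + ((blen i + glen i : ℕ) : Fin n)
  /-- (i) the first element of each block lies in `A` -/
  start_mem : ∀ i, bstart i ∈ A
  /-- (ii) the gaps contain no element of `A` -/
  gap_inter : ∀ i, Disjoint (cArc n (bstart i + (blen i : Fin n)) (glen i)) A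
  /-- the blocks and gaps cover `[n]` -/
  cover : ∀ x : Fin n,
    (∃ i, x ∈ cArc n (bstart i) (blen i)) ∨
      (∃ i, x ∈ cArc n (bstart i + (blen i : Fin n)) (glen i))
  /-- distinct blocks are disjoint -/
  block_disj : ∀ i j, i ≠ j →
    Disjoint (cArc n (bstart i) (blen i)) (cArc n (bstart j) (blen j))
  /-- distinct gaps are disjoint -/
  gap_disj : ∀ i j, i ≠ j →
    Disjoint (cArc n (bstart i + (blen i : Fin n)) (glen i))
      (cArc n (bstart j + (blen j : Fin n)) (glen j))
  /-- blocks are disjoint from gaps -/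
  block_gap_disj : ∀ i j,
    Disjoint (cArc n (bstart i) (blen i)) (cArc n (bstart j + (blen j : Fin n)) (glen j))
  /-- (iii) lower density bound: `δ·|A ∩ Bᵢ| − 1 < |Bᵢ|` -/
  density_lb : ∀ i,
    δ * ((A ∩ cArc n (bstart i) (blen i)).card : ℝ) - 1 < ((cArc n (bstart i) (blen i)).card : ℝ)
  /-- (iii) upper density bound: `|Bᵢ| ≤ δ·|A ∩ Bᵢ|` -/
  density_ub : ∀ i,
    ((cArc n (bstart i) (blen i)).card : ℝ) ≤ δ * ((A ∩ cArc n (bstart i) (blen i)).card : ℝ)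
  /-- (iv) every proper initial segment `[bᵢ,y] ⊊ Bᵢ` satisfies `|[bᵢ,y]| + 1 ≤ δ·|[bᵢ,y] ∩ A|` -/
  initial_seg : ∀ i, ∀ t : ℕ, t + 1 < blen i →
    ((cArc n (bstart i) (t + 1)).card : ℝ) + 1 ≤ δ * (((cArc n (bstart i) (t + 1)) ∩ A).card : ℝ)

namespace BlockStructure

variable {n : ℕ} [NeZero n] {δ : ℝ} {A : Finset (Fin n)}

/-- The block `Bᵢ`. -/
def block (P : BlockStructure n δ A) (i : Fin P.k) : Finset (Fin n) :=
  cArc n (P.bstart i) (P.blen i)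

/-- The gap `Gᵢ`. -/
def gap (P : BlockStructure n δ A) (i : Fin P.k) : Finset (Fin n) :=
  cArc n (P.bstart i + (P.blen i : Fin n)) (P.glen i)

/-- `𝒢_δ(A) = G₁ ∪ ⋯ ∪ G_k`, the union of the gaps. -/
def gapsUnion (P : BlockStructure n δ A) : Finset (Fin n) :=
  Finset.univ.biUnion P.gap

/-- `f_δ(A) = A ∪ 𝒢_δ(A)`. -/
def fset (P : BlockStructure n δ A) : Finset (Fin n) :=
  A ∪ P.gapsUnion

end BlockStructure

open Finset

lemma Finset.existsUnique_of_sum_card_bipartiteAbove_le {α β : Type*} {s : Finset α}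
    {t : Finset β} (r : α → β → Prop) [∀ a b, Decidable (r a b)]
    (hcover : ∀ b ∈ t, ∃ a ∈ s, r a b) (hsum : ∑ a ∈ s, #(t.bipartiteAbove r a) ≤ #t)
    {b : β} (hb : b ∈ t) : ∃! a, a ∈ s ∧ r a b := by
  have hpos : ∀ b ∈ t, 1 ≤ #(s.bipartiteBelow r b) := fun b hb => by
    obtain ⟨a, ha, hr⟩ := hcover b hb
    exact card_pos.2 ⟨a, (mem_bipartiteBelow r).2 ⟨ha, hr⟩⟩
  have hle : ∑ b ∈ t, #(s.bipartiteBelow r b) ≤ ∑ b ∈ t, 1 := by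
    rwa [← sum_card_bipartiteAbove_eq_sum_card_bipartiteBelow, ← card_eq_sum_ones]
  have := (sum_eq_sum_iff_of_le hpos).1 (le_antisymm (sum_le_sum hpos) hle) b hb
  simpa [card_eq_one_iff_existsUnique] using this.symm

lemma Nat.choose_mul_eq_choose_succ {n d m : ℕ} (h : n = m * (d + 1) + d) :
    n.choose d * m = n.choose (d + 1) := by
  have := Nat.choose_succ_right_eq n d
  rw [show n - d = m * (d + 1) by omega] at this
  exact Nat.eq_of_mul_eq_mul_right (by omega : 0 < d + 1) (by rw [this]; ring)

section Arc
variable {n : ℕ} [NeZero n]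

lemma injOn_cArc (s : Fin n) {l : ℕ} (hl : l ≤ n) :
    Set.InjOn (fun t : ℕ => s + (t : Fin n)) (range l) := by
  intro a ha b hb hab
  have := congrArg Fin.val (add_left_cancel hab)
  simp only [coe_range, Set.mem_Iio] at ha hb
  simpa [Nat.mod_eq_of_lt (ha.trans_le hl), Nat.mod_eq_of_lt (hb.trans_le hl)] using this

lemma card_cArc (s : Fin n) {l : ℕ} (hl : l ≤ n) : #(cArc n s l) = l := by
  rw [cArc, card_image_of_injOn (injOn_cArc s hl), card_range]

lemma cArc_self (s : Fin n) : cArc n s n = univ :=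
  eq_univ_of_card _ (by rw [card_cArc s le_rfl, Fintype.card_fin])

lemma exists_lt_of_mem_cArc {s x : Fin n} {l : ℕ} (hx : x ∈ cArc n s l) :
    ∃ q < l, q < n ∧ s + (q : Fin n) = x := by
  obtain ⟨t, ht, rfl⟩ := mem_image.1 hx
  refine ⟨t % n, (Nat.mod_le t n).trans_lt (mem_range.1 ht), Nat.mod_lt _ (NeZero.pos n), ?_⟩
  congr 1
  ext
  simp

end Arc

theorem exists_forall_le_of_map_add_eq_add_one {S : ℕ → ℤ} {n : ℕ} (hn : 0 < n)
    (hS : ∀ t, S (t + n) = S t + 1) : ∃ p, n ≤ p ∧ ∀ m, p < m + n → S p ≤ S m := by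
  have hper : ∀ r k, S (r + k * n) = S r + k := by
    intro r k
    induction k with
    | zero => simp
    | succ k ih => rw [add_mul, one_mul, ← add_assoc, hS, ih]; push_cast; ring
  set M := {t ∈ range n | ∀ u ∈ range n, S t ≤ S u}
  have hM : M.Nonempty := by
    obtain ⟨t, ht, hmin⟩ := (range n).exists_min_image S (nonempty_range_iff.2 hn.ne')
    exact ⟨t, mem_filter.2 ⟨ht, hmin⟩⟩
  obtain ⟨-, hp₀⟩ := mem_filter.1 (M.max'_mem hM)
  have hlast : ∀ m, M.max' hM < m → S (M.max' hM) < S m := by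
    intro m hm
    have hr := mem_range.2 (Nat.mod_lt m hn)
    have hmn := Nat.mod_add_div' m n
    rcases Nat.eq_zero_or_pos (m / n) with h0 | hpos
    · rw [h0, zero_mul, add_zero] at hmn
      rw [← hmn] at hm ⊢
      by_contra! hle
      have := M.le_max' _ (mem_filter.2 ⟨hr, fun u hu => hle.trans (hp₀ u hu)⟩)
      omega
    · rw [← hmn, hper]
      have := hp₀ _ hr
      omega
  exact ⟨M.max' hM + n, by omega, fun m hm => by rw [hS]; have := hlast m (by omega); omega⟩

section Weight
variable {n : ℕ} [NeZero n]

-- Points are indexed by `ℕ` and read modulo `n`, so that arcs become differences of prefix sums.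
def cycleWeight (c : ℕ) (D : Finset (Fin n)) (j : ℕ) : ℤ :=
  if (j : Fin n) ∈ D then (c : ℤ) - 1 else -1

lemma sum_cycleWeight_Ico (c : ℕ) (D : Finset (Fin n)) (m : ℕ) {l : ℕ} (hl : l ≤ n) :
    ∑ j ∈ Ico m (m + l), cycleWeight c D j = c * #(cArc n m l ∩ D) - l := by
  have : ∑ t ∈ range l, cycleWeight c D (m + t)
      = ∑ y ∈ cArc n m l, ((if y ∈ D then (c : ℤ) else 0) - 1) := by
    rw [cArc, sum_image (injOn_cArc _ hl)]
    refine sum_congr rfl fun t _ => ?_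
    simp only [cycleWeight, Nat.cast_add]
    split_ifs <;> ring
  rw [sum_Ico_eq_sum_range, add_tsub_cancel_left, this, sum_sub_distrib, sum_ite_mem, sum_const,
    sum_const, card_cArc _ hl]
  simp [mul_comm]

lemma sum_cycleWeight_range_add {c : ℕ} {D : Finset (Fin n)} (hD : c * #D = n + 1) (t : ℕ) :
    ∑ j ∈ range (t + n), cycleWeight c D j = ∑ j ∈ range t, cycleWeight c D j + 1 := by
  have hD' : (c : ℤ) * #D = n + 1 := by exact_mod_cast hD
  rw [← sum_range_add_sum_Ico _ (Nat.le_add_right t n), sum_cycleWeight_Ico c D t le_rfl, cArc_self,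
    univ_inter, hD']
  ring

theorem exists_mem_forall_card_cArc_inter_le {c : ℕ} {D : Finset (Fin n)} (hD : c * #D = n + 1) :
    ∃ x ∈ D, ∀ q < n, c * #(cArc n (x - q) (q + 1) ∩ D) ≤ q + c := by
  obtain ⟨p, hnp, hp⟩ :=
    exists_forall_le_of_map_add_eq_add_one (S := fun t => ∑ j ∈ range t, cycleWeight c D j)
      (NeZero.pos n) (sum_cycleWeight_range_add hD)
  have hstep := sum_range_succ (cycleWeight c D) p
  have hxD : (p : Fin n) ∈ D := by
    by_contra h
    have := hp (p + 1) (by omega)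
    rw [cycleWeight, if_neg h] at hstep
    omega
  refine ⟨p, hxD, fun q hq => ?_⟩
  have hwin := sum_cycleWeight_Ico c D (p - q) (by omega : q + 1 ≤ n)
  rw [show p - q + (q + 1) = p + 1 by omega, sum_Ico_eq_sub _ (by omega)] at hwin
  have hcast : ((p - q : ℕ) : Fin n) = (p : Fin n) - q :=
    eq_sub_of_add_eq (by rw [← Nat.cast_add, Nat.sub_add_cancel (by omega)])
  rw [hcast, Nat.cast_succ] at hwin
  have := hp (p - q) (by omega)
  rw [cycleWeight, if_pos hxD] at hstep
  have : (c : ℤ) * #(cArc n (p - q) (q + 1) ∩ D) ≤ q + c := by linarith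
  exact_mod_cast this

end Weight

lemma card_filter_mem_fInterval {n : ℕ} {A B : Finset (Fin n)} (hAB : A ⊆ B) :
    #{E ∈ powersetCard (#A + 1) (univ : Finset (Fin n)) | E ∈ fInterval A B} = #(B \ A) := by
  have : {E ∈ powersetCard (#A + 1) (univ : Finset (Fin n)) | E ∈ fInterval A B}
      = (B \ A).image (insert · A) := by
    ext E
    simp only [mem_filter, mem_powersetCard_univ, fInterval, mem_powerset, mem_image, mem_sdiff]
    constructor
    · rintro ⟨hE, hEB, hAE⟩
      have hEA : #(E \ A) = 1 := by rw [card_sdiff_of_subset hAE, hE]; omega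
      obtain ⟨y, hy⟩ := card_eq_one.1 hEA
      have hyE : y ∈ E \ A := hy ▸ mem_singleton_self y
      refine ⟨y, ⟨hEB (mem_sdiff.1 hyE).1, (mem_sdiff.1 hyE).2⟩, ?_⟩
      rw [insert_eq, ← hy, sdiff_union_of_subset hAE]
    · rintro ⟨y, ⟨hyB, hyA⟩, rfl⟩
      exact ⟨card_insert_of_notMem hyA, insert_subset hyB hAB, subset_insert y A⟩
  rw [this, card_image_of_injOn fun y hy y' _ h => (insert_inj (mem_sdiff.1 hy).2).1 h]

namespace BlockStructure
variable {n : ℕ} [NeZero n] {A : Finset (Fin n)}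

lemma card_cArc_le_mul {δ : ℝ} (P : BlockStructure n δ A) (i : Fin P.k) {t : ℕ}
    (ht : t ≤ P.blen i) :
    (#(cArc n (P.bstart i) t) : ℝ) ≤ δ * #(cArc n (P.bstart i) t ∩ A) := by
  rcases ht.lt_or_eq with ht | rfl
  · cases t with
    | zero => simp [cArc]
    | succ t => linarith [P.initial_seg i t ht]
  · rw [inter_comm]
    exact P.density_ub i

lemma card_block {c : ℕ} (P : BlockStructure n c A) (i : Fin P.k) :
    #(P.block i) = c * #(A ∩ P.block i) := by
  have hub : #(P.block i) ≤ c * #(A ∩ P.block i) := by exact_mod_cast P.density_ub i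
  have hlb : c * #(A ∩ P.block i) < #(P.block i) + 1 := by
    have h : (c : ℝ) * #(A ∩ P.block i) - 1 < #(P.block i) := P.density_lb i
    have : (c : ℝ) * #(A ∩ P.block i) < #(P.block i) + 1 := by linarith
    exact_mod_cast this
  omega

lemma disjoint_gapsUnion {δ : ℝ} (P : BlockStructure n δ A) : Disjoint P.gapsUnion A :=
  (disjoint_biUnion_left _ _ _).2 fun i _ => P.gap_inter i

lemma card_gapsUnion_add {c : ℕ} (P : BlockStructure n c A) : #P.gapsUnion + c * #A = n := by
  set blocks := univ.biUnion P.block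
  have hdisj : Disjoint blocks P.gapsUnion := (disjoint_biUnion_left _ _ _).2 fun i _ =>
    (disjoint_biUnion_right _ _ _).2 fun j _ => P.block_gap_disj i j
  have hunion : blocks ∪ P.gapsUnion = univ := eq_univ_of_forall fun x => by
    rcases P.cover x with ⟨i, hi⟩ | ⟨i, hi⟩
    · exact mem_union_left _ (mem_biUnion.2 ⟨i, mem_univ _, hi⟩)
    · exact mem_union_right _ (mem_biUnion.2 ⟨i, mem_univ _, hi⟩)
  have hA : A ∩ blocks = A := inter_eq_left.2 fun x hx =>
    (mem_union.1 (hunion ▸ mem_univ x)).resolve_right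
      (disjoint_left.1 P.disjoint_gapsUnion.symm hx)
  have hcardA : #A = ∑ i, #(A ∩ P.block i) := by
    conv_lhs => rw [← hA, inter_biUnion]
    exact card_biUnion fun i _ j _ hij =>
      (P.block_disj i j hij).mono inter_subset_right inter_subset_right
  have hblocks : #blocks = ∑ i, #(P.block i) := card_biUnion fun i _ j _ => P.block_disj i j
  calc #P.gapsUnion + c * #A = #blocks + #P.gapsUnion := by
        rw [hblocks, hcardA, mul_sum, sum_congr rfl fun i _ => P.card_block i, add_comm]
    _ = n := by rw [← card_union_of_disjoint hdisj, hunion, card_univ, Fintype.card_fin]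

lemma card_filter_mem_fInterval_fset_add {c : ℕ} (P : BlockStructure n c A) :
    #{E ∈ powersetCard (#A + 1) univ | E ∈ fInterval A P.fset} + c * #A = n := by
  rw [fset, card_filter_mem_fInterval subset_union_left, union_sdiff_left,
    sdiff_eq_self_of_disjoint P.disjoint_gapsUnion]
  exact P.card_gapsUnion_add

lemma mem_gapsUnion_of_forall_card_cArc_inter_le {c : ℕ} {D : Finset (Fin n)} {x : Fin n}
    (hxD : x ∈ D) (hx : ∀ q < n, c * #(cArc n (x - q) (q + 1) ∩ D) ≤ q + c)
    (P : BlockStructure n c (D.erase x)) : x ∈ P.gapsUnion := by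
  rcases P.cover x with ⟨i, hi⟩ | ⟨i, hi⟩
  · exfalso
    obtain ⟨q, hqb, hqn, hq⟩ := exists_lt_of_mem_cArc hi
    have hstart : P.bstart i = x - q := eq_sub_of_add_eq hq
    have hxarc : x ∈ cArc n (x - q) (q + 1) := mem_image.2 ⟨q, self_mem_range_succ q, by simp⟩
    have hdense : q + 1 ≤ c * #(cArc n (x - q) (q + 1) ∩ D.erase x) := by
      have := P.card_cArc_le_mul i hqb
      rw [hstart, card_cArc _ hqn] at this
      exact_mod_cast this
    have hcard : #(cArc n (x - q) (q + 1) ∩ D) = #(cArc n (x - q) (q + 1) ∩ D.erase x) + 1 := by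
      rw [inter_erase, card_erase_add_one (mem_inter.2 ⟨hxarc, hxD⟩)]
    have := hx q hqn
    rw [hcard, mul_add_one] at this
    omega
  · exact mem_biUnion.2 ⟨i, mem_univ _, hi⟩

lemma mem_fInterval_erase_fset {δ : ℝ} {D : Finset (Fin n)} {x : Fin n} (hx : x ∈ D)
    (P : BlockStructure n δ (D.erase x)) (hxP : x ∈ P.gapsUnion) :
    D ∈ fInterval (D.erase x) P.fset := by
  refine mem_filter.2 ⟨mem_powerset.2 fun y hy => ?_, erase_subset x D⟩
  rcases eq_or_ne y x with rfl | hyx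
  · exact mem_union_right _ hxP
  · exact mem_union_left _ (mem_erase.2 ⟨hyx, hy⟩)

end BlockStructure

theorem exists_mem_forall_mem_fInterval_erase_fset {n c : ℕ} [NeZero n] {D : Finset (Fin n)}
    (hD : c * #D = n + 1) :
    ∃ x ∈ D, ∀ P : BlockStructure n c (D.erase x), D ∈ fInterval (D.erase x) P.fset := by
  obtain ⟨x, hxD, hx⟩ := exists_mem_forall_card_cArc_inter_le hD
  exact ⟨x, hxD, fun P =>
    P.mem_fInterval_erase_fset hxD (P.mem_gapsUnion_of_forall_card_cArc_inter_le hxD hx)⟩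

theorem covered_by_unique_interval_general (c d n : ℕ)
    (hn : n = c * d + c - 1) [NeZero n]
    (F : Finset (Fin n) → Finset (Fin n))
    (hF : ∀ A : Finset (Fin n), A.card = d → ∃ P : BlockStructure n (c : ℝ) A, F A = P.fset)
    (D : Finset (Fin n)) (hD : D.card = d + 1) :
    ∃! A : Finset (Fin n), A.card = d ∧ D ∈ fInterval A (F A) := by
  have hc : 0 < c := Nat.pos_of_ne_zero fun hc => NeZero.ne n (by simpa [hc] using hn)
  have hn1 : n + 1 = c * d + c := by omega
  have hcover : ∀ E ∈ powersetCard (d + 1) univ,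
      ∃ A ∈ powersetCard d univ, E ∈ fInterval A (F A) := by
    intro E hE
    rw [mem_powersetCard_univ] at hE
    obtain ⟨x, hxE, hx⟩ :=
      exists_mem_forall_mem_fInterval_erase_fset (by rw [hE, mul_add_one, hn1])
    have hA : #(E.erase x) = d := by rw [card_erase_of_mem hxE, hE, add_tsub_cancel_right]
    obtain ⟨P, hP⟩ := hF _ hA
    exact ⟨E.erase x, mem_powersetCard_univ.2 hA, hP ▸ hx P⟩
  have hcount : ∀ A ∈ powersetCard d univ, #((powersetCard (d + 1) univ).bipartiteAbove
      (fun A E => E ∈ fInterval A (F A)) A) = c - 1 := by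
    intro A hA
    rw [mem_powersetCard_univ] at hA
    obtain ⟨P, hP⟩ := hF A hA
    have := P.card_filter_mem_fInterval_fset_add
    rw [hA, ← hP] at this
    rw [bipartiteAbove]
    omega
  have hchoose : n.choose d * (c - 1) = n.choose (d + 1) := by
    refine Nat.choose_mul_eq_choose_succ ?_
    rw [Nat.sub_one_mul, mul_add_one]
    have := Nat.le_mul_of_pos_left d hc
    omega
  simpa only [mem_powersetCard_univ] using existsUnique_of_sum_card_bipartiteAbove_le _ hcover
    (by rw [sum_congr rfl hcount, sum_const, smul_eq_mul, card_powersetCard, card_powersetCard,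
      card_univ, Fintype.card_fin, hchoose]) (mem_powersetCard_univ.2 hD)

/-- (Lemma "d+1") Let `c, d` be positive integers and `n = cd + c − 1`. Then
every `(d+1)`-subset of `[n]` is contained in exactly one of the intervals `[A, f_c(A)]`,
as `A` ranges over the `d`-subsets of `[n]`. Here `F` assigns to each `d`-subset `A` the
set `f_c(A)` coming from a block structure of `A` with density `c`. -/
theorem covered_by_unique_interval (c d n : ℕ) (hc : 0 < c) (hd : 0 < d)
    (hn : n = c * d + c - 1) [NeZero n]
    (F : Finset (Fin n) → Finset (Fin n))
    (hF : ∀ A : Finset (Fin n), A.card = d → ∃ P : BlockStructure n (c : ℝ) A, F A = P.fset)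
    (D : Finset (Fin n)) (hD : D.card = d + 1) :
    ∃! A : Finset (Fin n), A.card = d ∧ D ∈ fInterval A (F A) :=
  covered_by_unique_interval_general c d n hn F hF D hD
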